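/- arXiv:1211.2788 — 4 statements merged into one kernel-verified Lean document; each statement's English description precedes it below -/
import Mathlib

section
/- For every integer d, there exists a unique smallest partition μ (under inclusion of Young diagrams) among partitions colored in two colors with angle color 0 satisfying d(μ) = N_0(μ) - N_1(μ) = d, and this partition has exactly 2d² - d boxes, where for a box with coordinates (i,j) its color is (i - j) mod 2, and N_c(μ) counts boxes of color c. -/
/-- `d(μ) = N₀(μ) - N₁(μ)` for a Young diagram colored with angle color 0:
the box `(i, j)` has color `(i - j) mod 2 = (i + j) mod 2`. -/
def dcol0 (μ : YoungDiagram) : ℤ :=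
  ((μ.cells.filter fun c => (c.1 + c.2) % 2 = 0).card : ℤ) -
    ((μ.cells.filter fun c => (c.1 + c.2) % 2 = 1).card : ℤ)

/-!
Read row by row, `d(μ) = ∑ᵢ (-1)^i (λᵢ mod 2)`. Cut `μ` at row `i`: the rows above contribute
between `-⌊i/2⌋` and `⌈i/2⌉`, and the rows from `i` on form a diagram with `λᵢ` columns which,
the colouring being symmetric under transposition, contributes `±` something between `-⌊λᵢ/2⌋`
and `⌈λᵢ/2⌉`. A parity check then gives `i + λᵢ ≥ k := max (2d - 1) (-2d)` for every row, i.e.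
`μ` contains the staircase `(k, k - 1, …, 1)`; and that staircase has `d(μ) = d` and
`k(k + 1)/2 = 2d² - d` boxes.
-/

open Finset

lemma neg_one_pow_cases_mod_two (n : ℕ) :
    n % 2 = 0 ∧ (-1 : ℤ) ^ n = 1 ∨ n % 2 = 1 ∧ (-1 : ℤ) ^ n = -1 := by
  rcases n.even_or_odd with h | h
  · exact .inl ⟨Nat.even_iff.mp h, h.neg_one_pow⟩
  · exact .inr ⟨Nat.odd_iff.mp h, h.neg_one_pow⟩

lemma sum_range_neg_one_pow (n : ℕ) : ∑ j ∈ range n, (-1 : ℤ) ^ j = ((n % 2 : ℕ) : ℤ) := by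
  induction n with
  | zero => simp
  | succ n ih =>
    rw [sum_range_succ, ih]
    rcases neg_one_pow_cases_mod_two n with ⟨_, h⟩ | ⟨_, h⟩ <;> rw [h] <;> omega

lemma sum_range_neg_one_pow_mul_bounds (f : ℕ → ℤ) (hf : ∀ j, 0 ≤ f j ∧ f j ≤ 1) (n : ℕ) :
    -((n / 2 : ℕ) : ℤ) ≤ ∑ j ∈ range n, (-1) ^ j * f j ∧
      ∑ j ∈ range n, (-1) ^ j * f j ≤ (((n + 1) / 2 : ℕ) : ℤ) := by
  induction n with
  | zero => simp
  | succ n ih =>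
    rw [sum_range_succ]
    have := hf n
    rcases neg_one_pow_cases_mod_two n with ⟨_, h⟩ | ⟨_, h⟩ <;> rw [h] <;> omega

namespace YoungDiagram

lemma rowLen_eq_zero_iff (μ : YoungDiagram) (i : ℕ) : μ.rowLen i = 0 ↔ μ.colLen 0 ≤ i := by
  rw [← not_lt, ← mem_iff_lt_colLen, mem_iff_lt_rowLen, Nat.pos_iff_ne_zero, not_not]

lemma sum_cells_eq_sum_rows {M : Type*} [AddCommMonoid M] (μ : YoungDiagram) {n : ℕ}
    (hn : μ.colLen 0 ≤ n) (f : ℕ × ℕ → M) :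
    ∑ c ∈ μ.cells, f c = ∑ i ∈ range n, ∑ j ∈ range (μ.rowLen i), f (i, j) := by
  refine sum_finset_product _ _ _ fun ⟨i, j⟩ => ?_
  rw [mem_cells, mem_range, mem_range, ← mem_iff_lt_rowLen, iff_and_self]
  intro h
  exact (mem_iff_lt_colLen.mp (μ.up_left_mem le_rfl (Nat.zero_le j) h)).trans_le hn

lemma card_eq_sum_rowLen (μ : YoungDiagram) {n : ℕ} (hn : μ.colLen 0 ≤ n) :
    μ.card = ∑ i ∈ range n, μ.rowLen i := by
  rw [YoungDiagram.card, card_eq_sum_ones, μ.sum_cells_eq_sum_rows hn]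
  simp

noncomputable def dropRows (μ : YoungDiagram) (i : ℕ) : YoungDiagram where
  cells := μ.cells.preimage (Prod.map (· + i) id)
    ((add_left_injective i).prodMap Function.injective_id).injOn
  isLowerSet a b hab hb := by
    rw [mem_coe, mem_preimage, mem_cells] at hb ⊢
    exact μ.up_left_mem (Nat.add_le_add_right hab.1 i) hab.2 hb

@[simp]
lemma mem_dropRows {μ : YoungDiagram} {i : ℕ} {c : ℕ × ℕ} :
    c ∈ μ.dropRows i ↔ (c.1 + i, c.2) ∈ μ := by
  rw [← mem_cells, ← mem_cells]
  simp only [dropRows, mem_preimage]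
  rfl

lemma rowLen_dropRows (μ : YoungDiagram) (i j : ℕ) : (μ.dropRows i).rowLen j = μ.rowLen (j + i) :=
  eq_of_forall_lt_iff fun k => by rw [← mem_iff_lt_rowLen, ← mem_iff_lt_rowLen, mem_dropRows]

lemma colLen_dropRows_le (μ : YoungDiagram) (i : ℕ) : (μ.dropRows i).colLen 0 ≤ μ.colLen 0 := by
  rw [← rowLen_eq_zero_iff, rowLen_dropRows, rowLen_eq_zero_iff]
  omega

end YoungDiagram

open YoungDiagram

lemma dcol0_eq_sum_cells (μ : YoungDiagram) : dcol0 μ = ∑ c ∈ μ.cells, (-1 : ℤ) ^ (c.1 + c.2) := by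
  rw [dcol0, card_filter, card_filter, Nat.cast_sum, Nat.cast_sum, ← sum_sub_distrib]
  refine sum_congr rfl fun c _ => ?_
  rcases neg_one_pow_cases_mod_two (c.1 + c.2) with ⟨h2, h⟩ | ⟨h2, h⟩ <;> simp [h, h2]

lemma dcol0_transpose (μ : YoungDiagram) : dcol0 μ.transpose = dcol0 μ := by
  rw [dcol0_eq_sum_cells, dcol0_eq_sum_cells]
  exact sum_equiv (Equiv.prodComm ℕ ℕ) (by simp) fun c _ => by simp [add_comm]

lemma dcol0_eq_sum_rows (μ : YoungDiagram) {n : ℕ} (hn : μ.colLen 0 ≤ n) :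
    dcol0 μ = ∑ i ∈ range n, (-1) ^ i * ((μ.rowLen i % 2 : ℕ) : ℤ) := by
  rw [dcol0_eq_sum_cells, μ.sum_cells_eq_sum_rows hn]
  refine sum_congr rfl fun i _ => ?_
  simp only [pow_add, ← mul_sum, sum_range_neg_one_pow]

lemma dcol0_eq_add_dropRows (μ : YoungDiagram) (i : ℕ) :
    dcol0 μ = ∑ j ∈ range i, (-1) ^ j * ((μ.rowLen j % 2 : ℕ) : ℤ) +
      (-1) ^ i * dcol0 (μ.dropRows i) := by
  rw [dcol0_eq_sum_rows μ (n := i + μ.colLen 0) (by omega), sum_range_add,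
    dcol0_eq_sum_rows (μ.dropRows i) (μ.colLen_dropRows_le i), mul_sum]
  simp only [rowLen_dropRows, pow_add, mul_assoc, add_comm _ i]

lemma two_mul_dcol0_bounds_colLen_zero (μ : YoungDiagram) :
    -(μ.colLen 0 : ℤ) ≤ 2 * dcol0 μ ∧ 2 * dcol0 μ ≤ μ.colLen 0 + 1 := by
  have := sum_range_neg_one_pow_mul_bounds (fun i => ((μ.rowLen i % 2 : ℕ) : ℤ))
    (fun i => by omega) (μ.colLen 0)
  rw [dcol0_eq_sum_rows μ le_rfl]
  omega

lemma two_mul_dcol0_bounds_rowLen_zero (μ : YoungDiagram) :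
    -(μ.rowLen 0 : ℤ) ≤ 2 * dcol0 μ ∧ 2 * dcol0 μ ≤ μ.rowLen 0 + 1 := by
  simpa only [dcol0_transpose, colLen_transpose] using
    two_mul_dcol0_bounds_colLen_zero μ.transpose

lemma two_mul_dcol0_bounds (μ : YoungDiagram) (i : ℕ) :
    -(μ.rowLen i + i : ℤ) ≤ 2 * dcol0 μ ∧ 2 * dcol0 μ ≤ μ.rowLen i + i + 1 := by
  have head := sum_range_neg_one_pow_mul_bounds (fun j => ((μ.rowLen j % 2 : ℕ) : ℤ))
    (fun j => by omega) i
  have tail := two_mul_dcol0_bounds_rowLen_zero (μ.dropRows i)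
  rw [rowLen_dropRows, zero_add] at tail
  rw [dcol0_eq_add_dropRows μ i]
  rcases neg_one_pow_cases_mod_two i with ⟨_, h⟩ | ⟨_, h⟩ <;> rw [h] <;> omega

def staircase (k : ℕ) : YoungDiagram where
  cells := (range k ×ˢ range k).filter fun c => c.1 + c.2 < k
  isLowerSet a b hab ha := by
    simp only [coe_filter, mem_product, mem_range, Set.mem_ofPred_eq] at ha ⊢
    have := hab.1; have := hab.2
    omega

lemma mem_staircase {k : ℕ} {c : ℕ × ℕ} : c ∈ staircase k ↔ c.1 + c.2 < k := by
  rw [← mem_cells]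
  simp only [staircase, mem_filter, mem_product, mem_range]
  omega

lemma rowLen_staircase (k i : ℕ) : (staircase k).rowLen i = k - i :=
  eq_of_forall_lt_iff fun j => by rw [← mem_iff_lt_rowLen, mem_staircase]; omega

lemma colLen_staircase (k j : ℕ) : (staircase k).colLen j = k - j :=
  eq_of_forall_lt_iff fun i => by rw [← mem_iff_lt_colLen, mem_staircase]; omega

lemma card_staircase (k : ℕ) : (staircase k).card * 2 = k * (k + 1) := by
  rw [card_eq_sum_rowLen _ (n := k) (by simp [colLen_staircase])]
  simp only [rowLen_staircase]
  calc (∑ i ∈ range k, (k - i)) * 2 = (∑ i ∈ range (k + 1), (k + 1 - 1 - i)) * 2 := by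
        simp [sum_range_succ]
    _ = (∑ i ∈ range (k + 1), i) * 2 := congrArg (· * 2) (sum_range_reflect (fun i => i) _)
    _ = (k + 1) * k := by rw [sum_range_id_mul_two, Nat.add_sub_cancel]
    _ = k * (k + 1) := mul_comm _ _

lemma two_mul_dcol0_staircase (k : ℕ) :
    2 * dcol0 (staircase k) = ((k % 2 : ℕ) : ℤ) - (-1) ^ k * k := by
  rw [dcol0_eq_sum_rows _ (n := k) (by simp [colLen_staircase]), mul_sum]
  have row (i) (hi : i ∈ range k) :
      2 * ((-1) ^ i * (((staircase k).rowLen i % 2 : ℕ) : ℤ)) = (-1) ^ i - (-1) ^ k := by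
    rw [rowLen_staircase, ← Nat.add_sub_cancel' (mem_range.mp hi).le, pow_add,
      Nat.add_sub_cancel_left]
    rcases neg_one_pow_cases_mod_two (k - i) with ⟨h2, h⟩ | ⟨h2, h⟩ <;>
      · rw [h, h2]; push_cast; ring
  rw [sum_congr rfl row, sum_sub_distrib, sum_range_neg_one_pow, sum_const, card_range,
    nsmul_eq_mul, mul_comm]

lemma staircase_le_of_forall_le_add_rowLen {k : ℕ} {ν : YoungDiagram}
    (h : ∀ i, k ≤ i + ν.rowLen i) : staircase k ≤ ν := by
  rw [← cells_subset_iff]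
  rintro ⟨i, j⟩ hc
  rw [mem_cells, mem_staircase] at hc
  rw [mem_cells, mem_iff_lt_rowLen]
  have := h i
  omega

/-- For every integer `d` there is a unique smallest partition `μ` (under inclusion of
Young diagrams) with `d(μ) = d` (angle color `0`), and it has exactly `2d² - d` boxes. -/
theorem smallest_partition_color0 (d : ℤ) :
    ∃! μ : YoungDiagram,
      (dcol0 μ = d ∧ ∀ ν : YoungDiagram, dcol0 ν = d → μ ≤ ν) ∧
        (μ.card : ℤ) = 2 * d ^ 2 - d := by
  obtain ⟨k, hk⟩ : ∃ k : ℕ, (k : ℤ) = max (2 * d - 1) (-(2 * d)) :=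
    ⟨_, Int.toNat_of_nonneg (by omega)⟩
  have hdcol0 : dcol0 (staircase k) = d := by
    have := two_mul_dcol0_staircase k
    rcases neg_one_pow_cases_mod_two k with ⟨hk2, h⟩ | ⟨hk2, h⟩ <;> rw [h, hk2] at this <;> omega
  have hcard : ((staircase k).card : ℤ) = 2 * d ^ 2 - d := by
    have := card_staircase k
    obtain hk' | hk' : (k : ℤ) = 2 * d - 1 ∨ (k : ℤ) = -(2 * d) := by omega
    all_goals zify at this; rw [hk'] at this; linarith
  have hmin (ν : YoungDiagram) (hν : dcol0 ν = d) : staircase k ≤ ν :=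
    staircase_le_of_forall_le_add_rowLen fun i => by
      have := two_mul_dcol0_bounds ν i
      omega
  exact ⟨staircase k, ⟨⟨hdcol0, hmin⟩, hcard⟩,
    fun μ hμ => le_antisymm (hμ.1.2 _ hdcol0) (hmin μ hμ.1.1)⟩
end

section
/- The 2-core of a partition, defined as the result of repeatedly removing dominoes (1×2 or 2×1 rectangles) from the Young diagram while keeping the shape a Young diagram until no more removals are possible, is well-defined: it is independent of the sequence of removals. -/
/-- Two boxes are adjacent if they are horizontal or vertical neighbours. -/
def CellAdjacent (a b : ℕ × ℕ) : Prop :=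
  (a.1 = b.1 ∧ b.2 = a.2 + 1) ∨ (a.2 = b.2 ∧ b.1 = a.1 + 1)

/-- `DominoStep μ ν` : `ν` is obtained from `μ` by removing a domino (two adjacent
boxes) so that the result is again a Young diagram. -/
def DominoStep (μ ν : YoungDiagram) : Prop :=
  ν ≤ μ ∧ ∃ a b : ℕ × ℕ, CellAdjacent a b ∧ a ∉ ν ∧ b ∉ ν ∧
    μ.cells = insert a (insert b ν.cells)

/-- A Young diagram is a 2-core if no domino can be removed from it. -/
def IsTwoCore (μ : YoungDiagram) : Prop := ∀ ν : YoungDiagram, ¬ DominoStep μ ν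

/-- `TwoCoreOf lam c` : `c` is obtained from `lam` by a (finite) sequence of domino
removals and no further domino can be removed from `c`. -/
def TwoCoreOf (lam c : YoungDiagram) : Prop :=
  Relation.ReflTransGen DominoStep lam c ∧ IsTwoCore c

open Finset

/-! ### The alternating-sign invariant -/

noncomputable def dInv (μ : YoungDiagram) : ℤ := ∑ x ∈ μ.cells, (-1)^(x.1+x.2)

lemma adj_ne {a b : ℕ × ℕ} (h : CellAdjacent a b) : a ≠ b := by
  rcases h with ⟨h1, h2⟩ | ⟨h1, h2⟩ <;> intro he <;> subst he <;> omega

lemma adj_sign {a b : ℕ × ℕ} (h : CellAdjacent a b) :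
    (-1:ℤ)^(a.1+a.2) + (-1)^(b.1+b.2) = 0 := by
  rcases h with ⟨h1, h2⟩ | ⟨h1, h2⟩ <;>
    · rw [show b.1 + b.2 = (a.1 + a.2) + 1 by omega, pow_succ]; ring

lemma dInv_step {μ ν : YoungDiagram} (h : DominoStep μ ν) : dInv μ = dInv ν := by
  obtain ⟨-, a, b, hadj, ha, hb, hcells⟩ := h
  have hab := adj_ne hadj
  have hbν : b ∉ ν.cells := hb
  have haν : a ∉ insert b ν.cells := by simp [hab, ha]
  rw [dInv, dInv, hcells, Finset.sum_insert haν, Finset.sum_insert hbν, ← add_assoc,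
    adj_sign hadj, zero_add]

lemma card_step {μ ν : YoungDiagram} (h : DominoStep μ ν) : μ.card = ν.card + 2 := by
  obtain ⟨-, a, b, hadj, ha, hb, hcells⟩ := h
  have hab := adj_ne hadj
  have hbν : b ∉ ν.cells := hb
  have haν : a ∉ insert b ν.cells := by simp [hab, ha]
  rw [YoungDiagram.card, YoungDiagram.card, hcells, Finset.card_insert_of_notMem haν,
    Finset.card_insert_of_notMem hbν]

lemma dInv_rtg {μ ν : YoungDiagram} (h : Relation.ReflTransGen DominoStep μ ν) :
    dInv μ = dInv ν := by
  induction h with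
  | refl => rfl
  | tail _ h2 ih => rw [ih, dInv_step h2]

/-! ### Existence of a 2-core -/

lemma exists_core (n : ℕ) : ∀ lam : YoungDiagram, lam.card ≤ n → ∃ c, TwoCoreOf lam c := by
  induction n with
  | zero =>
    intro lam hl
    by_cases h : IsTwoCore lam
    · exact ⟨lam, Relation.ReflTransGen.refl, h⟩
    · simp only [IsTwoCore, not_forall, not_not] at h
      obtain ⟨ν, hν⟩ := h
      have := card_step hν
      omega
  | succ n ih =>
    intro lam hl
    by_cases h : IsTwoCore lam
    · exact ⟨lam, Relation.ReflTransGen.refl, h⟩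
    · simp only [IsTwoCore, not_forall, not_not] at h
      obtain ⟨ν, hν⟩ := h
      have hc := card_step hν
      obtain ⟨c, hc1, hc2⟩ := ih ν (by omega)
      exact ⟨c, Relation.ReflTransGen.head hν hc1, hc2⟩

/-! ### Constructing domino removals from shape conditions -/

lemma dominoStep_of_erase (μ : YoungDiagram) (a b : ℕ × ℕ) (hadj : CellAdjacent a b)
    (ha : a ∈ μ.cells) (hb : b ∈ μ.cells) (hab : a ≠ b)
    (hls : IsLowerSet (((μ.cells.erase a).erase b : Finset (ℕ × ℕ)) : Set (ℕ × ℕ))) :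
    ∃ ν, DominoStep μ ν := by
  refine ⟨⟨(μ.cells.erase a).erase b, hls⟩, ?_, a, b, hadj, ?_, ?_, ?_⟩
  · intro x hx
    simp only [YoungDiagram.mem_cells, YoungDiagram.mem_mk, Finset.mem_erase] at hx ⊢
    exact hx.2.2
  · simp [hab]
  · simp
  · simp only [YoungDiagram.mem_mk]
    rw [Finset.insert_erase (by simp [Ne.symm hab, hb]), Finset.insert_erase ha]

lemma horiz_step (μ : YoungDiagram) (i : ℕ) (h : μ.rowLen (i+1) + 2 ≤ μ.rowLen i) :
    ∃ ν, DominoStep μ ν := by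
  set L := μ.rowLen i with hL
  have hL2 : 2 ≤ L := by omega
  apply dominoStep_of_erase μ (i, L-2) (i, L-1)
  · left; constructor
    · simp
    · simp; omega
  · simp only [YoungDiagram.mem_cells, YoungDiagram.mem_iff_lt_rowLen]; omega
  · simp only [YoungDiagram.mem_cells, YoungDiagram.mem_iff_lt_rowLen]; omega
  · simp only [ne_eq, Prod.mk.injEq]; omega
  · rintro ⟨x2, y2⟩ ⟨x1, y1⟩ ⟨hx : x1 ≤ x2, hy : y1 ≤ y2⟩ hq
    simp only [Finset.coe_erase, Set.mem_diff, Finset.mem_coe, Finset.mem_erase, ne_eq,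
      Prod.mk.injEq, Set.mem_singleton_iff, YoungDiagram.mem_cells] at hq ⊢
    have hm1 : (x1, y1) ∈ μ := μ.up_left_mem hx hy hq.1.1
    have hm2 : y2 < μ.rowLen x2 := YoungDiagram.mem_iff_lt_rowLen.mp hq.1.1
    have key : ¬ (x1 = i ∧ L - 2 ≤ y1) := by
      rintro ⟨rfl, hy1⟩
      rcases Nat.lt_or_ge x2 (x1+1) with h2 | h2
      · have hx2 : μ.rowLen x2 = μ.rowLen x1 := by rw [show x2 = x1 by omega]
        omega
      · have := μ.rowLen_anti (x1+1) x2 h2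
        omega
    exact ⟨⟨hm1, fun hc => key ⟨hc.1, by omega⟩⟩, fun hc => key ⟨hc.1, by omega⟩⟩

lemma vert_step (μ : YoungDiagram) (i : ℕ) (hpos : 0 < μ.rowLen i)
    (heq : μ.rowLen i = μ.rowLen (i+1)) (hlt : μ.rowLen (i+2) < μ.rowLen i) :
    ∃ ν, DominoStep μ ν := by
  set L := μ.rowLen i with hL
  apply dominoStep_of_erase μ (i, L-1) (i+1, L-1)
  · right; constructor <;> simp
  · simp only [YoungDiagram.mem_cells, YoungDiagram.mem_iff_lt_rowLen]; omega
  · simp only [YoungDiagram.mem_cells, YoungDiagram.mem_iff_lt_rowLen]; omega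
  · simp only [ne_eq, Prod.mk.injEq]; omega
  · rintro ⟨x2, y2⟩ ⟨x1, y1⟩ ⟨hx : x1 ≤ x2, hy : y1 ≤ y2⟩ hq
    simp only [Finset.coe_erase, Set.mem_diff, Finset.mem_coe, Finset.mem_erase, ne_eq,
      Prod.mk.injEq, Set.mem_singleton_iff, YoungDiagram.mem_cells] at hq ⊢
    have hm1 : (x1, y1) ∈ μ := μ.up_left_mem hx hy hq.1.1
    have hm2 : y2 < μ.rowLen x2 := YoungDiagram.mem_iff_lt_rowLen.mp hq.1.1
    have key : ¬ (i ≤ x1 ∧ x1 ≤ i + 1 ∧ y1 = L - 1) := by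
      rintro ⟨hi1, hi2, rfl⟩
      rcases Nat.lt_or_ge x2 (i+2) with h2 | h2
      · have ha1 : μ.rowLen x2 ≤ μ.rowLen i := μ.rowLen_anti i x2 (by omega)
        have ha2 : μ.rowLen (i+1) ≤ μ.rowLen x2 := μ.rowLen_anti x2 (i+1) (by omega)
        omega
      · have := μ.rowLen_anti (i+2) x2 h2
        omega
    exact ⟨⟨hm1, fun hc => key ⟨by omega, by omega, hc.2⟩⟩,
      fun hc => key ⟨by omega, by omega, hc.2⟩⟩

/-! ### 2-cores are staircases -/

lemma rowLen_eventually_zero (μ : YoungDiagram) (m : ℕ) (hm : μ.colLen 0 ≤ m) :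
    μ.rowLen m = 0 := by
  by_contra h
  have : (m, 0) ∈ μ := YoungDiagram.mem_iff_lt_rowLen.mpr (by omega)
  rw [YoungDiagram.mem_iff_lt_colLen] at this
  omega

lemma twoCore_rowLen_succ {μ : YoungDiagram} (h : IsTwoCore μ) (i : ℕ) :
    μ.rowLen (i+1) = μ.rowLen i - 1 := by
  have hanti : μ.rowLen (i+1) ≤ μ.rowLen i := μ.rowLen_anti i (i+1) (by omega)
  have hub : μ.rowLen i ≤ μ.rowLen (i+1) + 1 := by
    by_contra hc
    obtain ⟨ν, hν⟩ := horiz_step μ i (by omega)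
    exact h ν hν
  rcases Nat.eq_zero_or_pos (μ.rowLen i) with h0 | hpos
  · omega
  rcases Nat.lt_or_ge (μ.rowLen (i+1)) (μ.rowLen i) with hlt | hge
  · omega
  exfalso
  set L := μ.rowLen i with hL
  have hP : ∃ m, μ.rowLen (i+1+m) < L := by
    refine ⟨μ.colLen 0, ?_⟩
    rw [rowLen_eventually_zero μ _ (by omega)]
    omega
  set m₀ := Nat.find hP with hm₀
  have hfind : μ.rowLen (i+1+m₀) < L := Nat.find_spec hP
  have hm₀pos : 0 < m₀ := by
    rcases Nat.eq_zero_or_pos m₀ with h0 | h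
    · rw [h0, Nat.add_zero] at hfind; omega
    · exact h
  have hprev : ∀ m < m₀, L ≤ μ.rowLen (i+1+m) := fun m hm => by
    have := Nat.find_min hP hm
    omega
  set k := i + m₀ with hk
  have hk1 : μ.rowLen (k-1+1) = L := by
    have h1 : L ≤ μ.rowLen (i+1+(m₀-1)) := hprev (m₀-1) (by omega)
    have h2 : μ.rowLen (i+1+(m₀-1)) ≤ μ.rowLen i := μ.rowLen_anti _ _ (by omega)
    have he : k-1+1 = i+1+(m₀-1) := by omega
    rw [he]; omega
  have hk0 : μ.rowLen (k-1) = L := by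
    have h2 : μ.rowLen (k-1) ≤ μ.rowLen i := μ.rowLen_anti _ _ (by omega)
    have h3 : μ.rowLen (k-1+1) ≤ μ.rowLen (k-1) := μ.rowLen_anti _ _ (by omega)
    omega
  have hk2 : μ.rowLen (k-1+2) < L := by
    have he : k-1+2 = i+1+m₀ := by omega
    rw [he]; exact hfind
  obtain ⟨ν, hν⟩ := vert_step μ (k-1) (by omega) (by omega) (by omega)
  exact h ν hν

lemma twoCore_rowLen {μ : YoungDiagram} (h : IsTwoCore μ) (i : ℕ) :
    μ.rowLen i = μ.rowLen 0 - i := by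
  induction i with
  | zero => omega
  | succ n ih => rw [twoCore_rowLen_succ h n]; omega

/-! ### Staircase diagrams and their invariant -/

def stair (k : ℕ) : Finset (ℕ × ℕ) :=
  (Finset.range k ×ˢ Finset.range k).filter (fun p => p.1 + p.2 < k)

lemma mem_stair {k : ℕ} {p : ℕ × ℕ} : p ∈ stair k ↔ p.1 + p.2 < k := by
  simp only [stair, Finset.mem_filter, Finset.mem_product, Finset.mem_range]
  omega

noncomputable def gS (k : ℕ) : ℤ := ∑ p ∈ stair k, (-1)^(p.1+p.2)

lemma stair_succ (k : ℕ) :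
    stair (k+1) = stair k ∪ (Finset.range (k+1)).image (fun i => (i, k-i)) := by
  ext ⟨x, y⟩
  simp only [mem_stair, Finset.mem_union, Finset.mem_image, Finset.mem_range, Prod.mk.injEq]
  constructor
  · intro h
    rcases Nat.lt_or_ge (x + y) k with h1 | h1
    · exact Or.inl h1
    · exact Or.inr ⟨x, by omega, rfl, by omega⟩
  · rintro (h | ⟨i, hi, rfl, rfl⟩) <;> omega

lemma gS_succ (k : ℕ) : gS (k+1) = gS k + (k+1) * (-1)^k := by
  rw [gS, stair_succ, Finset.sum_union, gS]
  · congr 1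
    rw [Finset.sum_image (by intro a _ b _ h; exact (Prod.ext_iff.mp h).1)]
    rw [Finset.sum_congr rfl (fun i hi => by
      rw [show i + (k - i) = k by simp at hi; omega])]
    simp [mul_comm]
  · rw [Finset.disjoint_right]
    rintro ⟨x, y⟩ hp hq
    simp only [Finset.mem_image, Finset.mem_range, Prod.mk.injEq] at hp
    obtain ⟨i, hi, rfl, rfl⟩ := hp
    rw [mem_stair] at hq
    simp at hq; omega

lemma gS_closed (k : ℕ) : 2 * gS k = if k % 2 = 0 then -(k:ℤ) else (k:ℤ)+1 := by
  induction k with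
  | zero => simp [gS, stair]
  | succ n ih =>
    rw [gS_succ, mul_add]
    rcases Nat.even_or_odd n with he | ho
    · rw [he.neg_one_pow]
      rw [if_pos (Nat.even_iff.mp he)] at ih
      rw [if_neg (by omega : ¬ (n+1) % 2 = 0)]
      push_cast
      linarith
    · rw [ho.neg_one_pow]
      have hm : n % 2 = 1 := Nat.odd_iff.mp ho
      rw [if_neg (by omega)] at ih
      rw [if_pos (by omega)]
      push_cast
      linarith

lemma gS_inj {a b : ℕ} (h : gS a = gS b) : a = b := by
  have ha := gS_closed a
  have hb := gS_closed b
  rw [h] at ha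
  split_ifs at ha hb <;> omega

lemma twoCore_cells_eq {μ : YoungDiagram} (h : IsTwoCore μ) :
    μ.cells = stair (μ.rowLen 0) := by
  ext ⟨i, j⟩
  rw [mem_stair, YoungDiagram.mem_cells, YoungDiagram.mem_iff_lt_rowLen, twoCore_rowLen h i]
  omega

lemma dInv_twoCore {μ : YoungDiagram} (h : IsTwoCore μ) : dInv μ = gS (μ.rowLen 0) := by
  rw [dInv, twoCore_cells_eq h, gS]

lemma twoCore_eq {c₁ c₂ : YoungDiagram} (h₁ : IsTwoCore c₁) (h₂ : IsTwoCore c₂)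
    (hd : dInv c₁ = dInv c₂) : c₁ = c₂ := by
  rw [dInv_twoCore h₁, dInv_twoCore h₂] at hd
  have hk := gS_inj hd
  ext x
  rw [twoCore_cells_eq h₁, twoCore_cells_eq h₂, hk]

/-- The 2-core of a partition is well defined: it exists and is independent of
the sequence of domino removals. -/
theorem twoCore_exists_unique (lam : YoungDiagram) :
    (∃ c : YoungDiagram, TwoCoreOf lam c) ∧
      ∀ c₁ c₂ : YoungDiagram, TwoCoreOf lam c₁ → TwoCoreOf lam c₂ → c₁ = c₂ := by
  constructor
  · exact exists_core lam.card lam le_rfl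
  · rintro c₁ c₂ ⟨hr₁, hc₁⟩ ⟨hr₂, hc₂⟩
    exact twoCore_eq hc₁ hc₂ (by rw [← dInv_rtg hr₁, ← dInv_rtg hr₂])
end

section
/- Character identity: Σ_{d₁,d₂ ∈ ℤ} ( (t√q)^{d₁+d₂} q^{(2d₁²+2d₂²-d₁-d₂)/2} + (t√q)^{d₁+d₂+1} q^{(2d₁²+2d₂²+d₁+d₂)/2} ) = Σ_{d,k ∈ ℤ} q^{(d²+k²)/2} t^d. (Equivalently, after substituting q → q², an identity of formal Laurent series with integer exponents.) -/
/-- Character identity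
`∑_{d₁,d₂} ((t√q)^{d₁+d₂} q^{(2d₁²+2d₂²-d₁-d₂)/2} + (t√q)^{d₁+d₂+1} q^{(2d₁²+2d₂²+d₁+d₂)/2})`
`= ∑_{d,k} q^{(d²+k²)/2} t^d`, stated coefficientwise after `q → q²`: for each
`t`-degree `D` and `q`-degree `M`, the terms on the left with `t`-degree `D` and
`q`-degree `M` are in bijection with those on the right. -/
theorem character_identity_A22 (D M : ℤ) :
    Nonempty
      (({p : ℤ × ℤ // p.1 + p.2 = D ∧ 2 * p.1 ^ 2 + 2 * p.2 ^ 2 = M} ⊕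
          {p : ℤ × ℤ //
            p.1 + p.2 + 1 = D ∧ 2 * p.1 ^ 2 + 2 * p.2 ^ 2 + 2 * (p.1 + p.2) + 1 = M}) ≃
        {k : ℤ // D ^ 2 + k ^ 2 = M}) := by
  refine ⟨{
    toFun := fun x => match x with
      | .inl ⟨⟨a, b⟩, h1, h2⟩ => ⟨a - b, by
          linear_combination h2 - (a + b + D) * h1⟩
      | .inr ⟨⟨a, b⟩, h1, h2⟩ => ⟨a - b, by
          linear_combination h2 - (a + b + D + 1) * h1⟩
    invFun := fun ⟨k, hk⟩ =>
      if h : (D - k) % 2 = 0 then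
        .inl ⟨((D + k) / 2, (D - k) / 2), by
          constructor
          · omega
          · have ha : (D + k) / 2 + (D - k) / 2 = D := by omega
            have hb : (D + k) / 2 - (D - k) / 2 = k := by omega
            linear_combination hk + ((D + k) / 2 + (D - k) / 2 + D) * ha +
              ((D + k) / 2 - (D - k) / 2 + k) * hb⟩
      else
        .inr ⟨((D - 1 + k) / 2, (D - 1 - k) / 2), by
          constructor
          · omega
          · have ha : (D - 1 + k) / 2 + (D - 1 - k) / 2 = D - 1 := by omega
            have hb : (D - 1 + k) / 2 - (D - 1 - k) / 2 = k := by omega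
            linear_combination hk + ((D - 1 + k) / 2 + (D - 1 - k) / 2 + D + 1) * ha +
              ((D - 1 + k) / 2 - (D - 1 - k) / 2 + k) * hb⟩
    left_inv := fun x => by
      match x with
      | .inl ⟨⟨a, b⟩, h1, h2⟩ =>
        have hpar : (D - (a - b)) % 2 = 0 := by omega
        simp only [dif_pos hpar]
        congr 1
        apply Subtype.ext
        have : (D + (a - b)) / 2 = a := by omega
        have : (D - (a - b)) / 2 = b := by omega
        simp_all
      | .inr ⟨⟨a, b⟩, h1, h2⟩ =>
        have hpar : ¬ (D - (a - b)) % 2 = 0 := by omega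
        simp only [dif_neg hpar]
        congr 1
        apply Subtype.ext
        have : (D - 1 + (a - b)) / 2 = a := by omega
        have : (D - 1 - (a - b)) / 2 = b := by omega
        simp_all
    right_inv := fun ⟨k, hk⟩ => by
      by_cases h : (D - k) % 2 = 0
      · simp only [dif_pos h]
        apply Subtype.ext
        simp only
        omega
      · simp only [dif_neg h]
        apply Subtype.ext
        simp only
        omega }⟩
end

section
/- Norms of integral-form Macdonald polynomials: ⟨J_λ(q,t), J_λ(q,t)⟩_{q,t} = Π_{s∈λ} (1 - q^{a(s)} t^{l(s)+1})(1 - q^{a(s)+1} t^{l(s)}); verify for all partitions λ with |λ| ≤ 3. -/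
/-- The field `ℚ(q, t)` of rational functions in the Macdonald parameters. -/
abbrev Kf : Type := FractionRing (MvPolynomial (Fin 2) ℚ)

noncomputable def qv : Kf := algebraMap (MvPolynomial (Fin 2) ℚ) Kf (MvPolynomial.X 0)
noncomputable def tv : Kf := algebraMap (MvPolynomial (Fin 2) ℚ) Kf (MvPolynomial.X 1)

/-- Macdonald scalar product on degree-1 symmetric functions, coordinate `a ↔ a·p₁`. -/
noncomputable def ip1 (x y : Kf) : Kf := x * y * ((1 - qv) / (1 - tv))

/-- Macdonald scalar product on degree-2 symmetric functions,
coordinates `(a, b) ↔ a·p₂ + b·p₁²`. -/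
noncomputable def ip2 (x y : Kf × Kf) : Kf :=
  x.1 * y.1 * (2 * (1 - qv ^ 2) / (1 - tv ^ 2)) +
    x.2 * y.2 * (2 * ((1 - qv) / (1 - tv)) ^ 2)

/-- Macdonald scalar product on degree-3 symmetric functions,
coordinates `(a, b, c) ↔ a·p₃ + b·p₂p₁ + c·p₁³`. -/
noncomputable def ip3 (x y : Kf × Kf × Kf) : Kf :=
  x.1 * y.1 * (3 * (1 - qv ^ 3) / (1 - tv ^ 3)) +
    x.2.1 * y.2.1 * (2 * (1 - qv ^ 2) * (1 - qv) / ((1 - tv ^ 2) * (1 - tv))) +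
    x.2.2 * y.2.2 * (6 * ((1 - qv) / (1 - tv)) ^ 3)

/-- `m_{(2)} = p₂`. -/
noncomputable def m2 : Kf × Kf := (1, 0)
/-- `m_{(1,1)} = (p₁² - p₂)/2`. -/
noncomputable def m11 : Kf × Kf := (-(1 / 2), 1 / 2)
/-- `m_{(3)} = p₃`. -/
noncomputable def m3 : Kf × Kf × Kf := (1, 0, 0)
/-- `m_{(2,1)} = p₂p₁ - p₃`. -/
noncomputable def m21 : Kf × Kf × Kf := (-1, 1, 0)
/-- `m_{(1,1,1)} = (p₁³ - 3p₂p₁ + 2p₃)/6`. -/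
noncomputable def m111 : Kf × Kf × Kf := (1 / 3, -(1 / 2), 1 / 6)


private lemma key_ne (P : MvPolynomial (Fin 2) ℚ) (h : MvPolynomial.constantCoeff P = 0) :
    1 - algebraMap (MvPolynomial (Fin 2) ℚ) Kf P ≠ 0 := by
  have e : (1 : Kf) - algebraMap (MvPolynomial (Fin 2) ℚ) Kf P
      = algebraMap (MvPolynomial (Fin 2) ℚ) Kf (1 - P) := by rw [map_sub, map_one]
  rw [e, map_ne_zero_iff _ (IsFractionRing.injective (MvPolynomial (Fin 2) ℚ) Kf)]
  intro hP
  have h2 : MvPolynomial.constantCoeff (1 - P) = 0 := by rw [hP]; simp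
  rw [map_sub, map_one, h] at h2
  norm_num at h2

private lemma h1 : (1 : Kf) - tv ≠ 0 := by rw [tv]; exact key_ne _ (by simp)
private lemma h2 : (1 : Kf) - tv ^ 2 ≠ 0 := by rw [tv, ← map_pow]; exact key_ne _ (by simp)
private lemma h3 : (1 : Kf) - tv ^ 3 ≠ 0 := by rw [tv, ← map_pow]; exact key_ne _ (by simp)
private lemma h4 : (1 : Kf) - qv * tv ≠ 0 := by
  rw [qv, tv, ← map_mul]; exact key_ne _ (by simp)
private lemma h5 : (1 : Kf) - qv ^ 2 * tv ≠ 0 := by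
  rw [qv, tv, ← map_pow, ← map_mul]; exact key_ne _ (by simp)
private lemma h6 : (1 : Kf) - qv * tv ^ 2 ≠ 0 := by
  rw [qv, tv, ← map_pow, ← map_mul]; exact key_ne _ (by simp)

private lemma ip2_smul (s : Kf) (x y : Kf × Kf) : ip2 (s • x) y = s * ip2 x y := by
  simp only [ip2, Prod.smul_fst, Prod.smul_snd, smul_eq_mul]
  ring

private lemma ip3_smul (s : Kf) (x y : Kf × Kf × Kf) : ip3 (s • x) y = s * ip3 x y := by
  simp only [ip3, Prod.smul_fst, Prod.smul_snd, smul_eq_mul]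
  ring

private lemma ip3_smul' (s : Kf) (x y : Kf × Kf × Kf) : ip3 x (s • y) = s * ip3 x y := by
  simp only [ip3, Prod.smul_fst, Prod.smul_snd, smul_eq_mul]
  ring

private lemma D2_ne : ((1 : Kf) - tv ^ 2) * (1 - tv) ^ 2 ≠ 0 :=
  mul_ne_zero h2 (pow_ne_zero 2 h1)

private lemma D3_ne : ((1 : Kf) - tv ^ 3) * (1 - tv ^ 2) * (1 - tv) ^ 4 ≠ 0 :=
  mul_ne_zero (mul_ne_zero h3 h2) (pow_ne_zero 4 h1)

private lemma ip2_eq (x y : Kf × Kf) :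
    ip2 x y = (x.1 * y.1 * 2 * (1 - qv ^ 2) * (1 - tv) ^ 2 +
      x.2 * y.2 * 2 * (1 - qv) ^ 2 * (1 - tv ^ 2)) / ((1 - tv ^ 2) * (1 - tv) ^ 2) := by
  rw [eq_div_iff D2_ne]
  simp only [ip2]
  field_simp [h1, h2]

private lemma ip3_eq (x y : Kf × Kf × Kf) :
    ip3 x y = (x.1 * y.1 * 3 * (1 - qv ^ 3) * (1 - tv ^ 2) * (1 - tv) ^ 4 +
      x.2.1 * y.2.1 * 2 * (1 - qv ^ 2) * (1 - qv) * (1 - tv ^ 3) * (1 - tv) ^ 3 +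
      x.2.2 * y.2.2 * 6 * (1 - qv) ^ 3 * (1 - tv ^ 3) * (1 - tv ^ 2) * (1 - tv)) /
      ((1 - tv ^ 3) * (1 - tv ^ 2) * (1 - tv) ^ 4) := by
  rw [eq_div_iff D3_ne]
  simp only [ip3]
  field_simp [h1, h2, h3]

set_option maxHeartbeats 4000000 in
/-- Norms of the integral-form Macdonald polynomials `J_λ = c_λ P_λ`,
`c_λ = ∏_{s∈λ}(1 - q^{a(s)} t^{l(s)+1})`:
`⟨J_λ, J_λ⟩ = ∏_{s∈λ} (1 - q^{a(s)} t^{l(s)+1})(1 - q^{a(s)+1} t^{l(s)})`, verified for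
all partitions with `|λ| ≤ 3` (`P_λ` being the unitriangular orthogonal family). -/
theorem macdonald_J_norms_le_three :
    ∃ u a b c : Kf,
      ip2 (m2 + u • m11) m11 = 0 ∧
      ip3 (m3 + a • m21 + b • m111) (m21 + c • m111) = 0 ∧
      ip3 (m3 + a • m21 + b • m111) m111 = 0 ∧
      ip3 (m21 + c • m111) m111 = 0 ∧
      -- λ = ∅ : J_∅ = 1
      (1 : Kf) * 1 = 1 ∧
      -- λ = (1) : J_{(1)} = (1-t) p₁
      ip1 ((1 - tv) * 1) ((1 - tv) * 1) = (1 - tv) * (1 - qv) ∧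
      -- λ = (2) : J_{(2)} = (1-qt)(1-t) P_{(2)}
      ip2 (((1 - qv * tv) * (1 - tv)) • (m2 + u • m11))
          (((1 - qv * tv) * (1 - tv)) • (m2 + u • m11)) =
        (1 - qv * tv) * (1 - tv) * (1 - qv ^ 2) * (1 - qv) ∧
      -- λ = (1,1) : J_{(1,1)} = (1-t²)(1-t) m_{(1,1)}
      ip2 (((1 - tv ^ 2) * (1 - tv)) • m11) (((1 - tv ^ 2) * (1 - tv)) • m11) =
        (1 - tv ^ 2) * (1 - tv) * (1 - qv * tv) * (1 - qv) ∧
      -- λ = (3) : J_{(3)} = (1-q²t)(1-qt)(1-t) P_{(3)}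
      ip3 (((1 - qv ^ 2 * tv) * (1 - qv * tv) * (1 - tv)) • (m3 + a • m21 + b • m111))
          (((1 - qv ^ 2 * tv) * (1 - qv * tv) * (1 - tv)) • (m3 + a • m21 + b • m111)) =
        (1 - qv ^ 2 * tv) * (1 - qv * tv) * (1 - tv) *
          (1 - qv ^ 3) * (1 - qv ^ 2) * (1 - qv) ∧
      -- λ = (2,1) : J_{(2,1)} = (1-qt²)(1-t)² P_{(2,1)}
      ip3 (((1 - qv * tv ^ 2) * (1 - tv) ^ 2) • (m21 + c • m111))
          (((1 - qv * tv ^ 2) * (1 - tv) ^ 2) • (m21 + c • m111)) =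
        (1 - qv * tv ^ 2) * (1 - tv) ^ 2 * (1 - qv ^ 2 * tv) * (1 - qv) ^ 2 ∧
      -- λ = (1,1,1) : J_{(1,1,1)} = (1-t³)(1-t²)(1-t) m_{(1,1,1)}
      ip3 (((1 - tv ^ 3) * (1 - tv ^ 2) * (1 - tv)) • m111)
          (((1 - tv ^ 3) * (1 - tv ^ 2) * (1 - tv)) • m111) =
        (1 - tv ^ 3) * (1 - tv ^ 2) * (1 - tv) *
          (1 - qv * tv ^ 2) * (1 - qv * tv) * (1 - qv) := by
  have hf2 : ((1 : Kf) - qv * tv) * (1 - tv) ≠ 0 := mul_ne_zero h4 h1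
  have hf3 : ((1 : Kf) - qv ^ 2 * tv) * (1 - qv * tv) * (1 - tv) ≠ 0 :=
    mul_ne_zero (mul_ne_zero h5 h4) h1
  have hf21 : ((1 : Kf) - qv * tv ^ 2) * (1 - tv) ^ 2 ≠ 0 :=
    mul_ne_zero h6 (pow_ne_zero 2 h1)
  have hJ2 : ((1 - qv * tv) * (1 - tv)) • (m2 + ((1 + qv) * (1 - tv) / (1 - qv * tv)) • m11)
      = (((1 - qv) * (1 - tv ^ 2) / 2, (1 + qv) * (1 - tv) ^ 2 / 2) : Kf × Kf) := by
    simp only [m2, m11, Prod.smul_mk, Prod.mk_add_mk, smul_eq_mul, Prod.mk.injEq]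
    constructor
    · field_simp [h1, h4]
      ring
    · field_simp [h1, h4]
      ring
  have hJ3 : ((1 - qv ^ 2 * tv) * (1 - qv * tv) * (1 - tv)) •
        (m3 + ((1 + qv + qv ^ 2) * (1 - tv) / (1 - qv ^ 2 * tv)) • m21 +
          ((1 + qv) * (1 + qv + qv ^ 2) * (1 - tv) ^ 2 /
            ((1 - qv * tv) * (1 - qv ^ 2 * tv))) • m111)
      = (((1 - qv) * (1 - qv ^ 2) * (1 - tv ^ 3) / 3,
          (1 - qv ^ 3) * (1 - tv) * (1 - tv ^ 2) / 2,
          (1 + qv) * (1 + qv + qv ^ 2) * (1 - tv) ^ 3 / 6) : Kf × Kf × Kf) := by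
    simp only [m3, m21, m111, Prod.smul_mk, Prod.mk_add_mk, smul_eq_mul, Prod.mk.injEq]
    refine ⟨?_, ?_, ?_⟩
    · field_simp [h1, h4, h5]
      ring
    · field_simp [h1, h4, h5]
      ring
    · field_simp [h1, h4, h5]
      ring
  have hJ21 : ((1 - qv * tv ^ 2) * (1 - tv) ^ 2) •
        (m21 + ((1 - tv) * (2 + qv + tv + 2 * (qv * tv)) / (1 - qv * tv ^ 2)) • m111)
      = ((-(1 - qv) * (1 - tv) * (1 - tv ^ 3) / 3,
          (1 - tv ^ 2) * (tv - qv) * (1 - tv) / 2,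
          (2 - 5 * tv + 3 * tv ^ 2 + tv ^ 3 - tv ^ 4 +
            qv * (1 - tv - 3 * tv ^ 2 + 5 * tv ^ 3 - 2 * tv ^ 4)) / 6) : Kf × Kf × Kf) := by
    simp only [m21, m111, Prod.smul_mk, Prod.mk_add_mk, smul_eq_mul, Prod.mk.injEq]
    refine ⟨?_, ?_, ?_⟩
    · field_simp [h1, h6]
      ring
    · field_simp [h1, h6]
      ring
    · field_simp [h1, h6]
      ring
  refine ⟨(1 + qv) * (1 - tv) / (1 - qv * tv),
    (1 + qv + qv ^ 2) * (1 - tv) / (1 - qv ^ 2 * tv),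
    (1 + qv) * (1 + qv + qv ^ 2) * (1 - tv) ^ 2 / ((1 - qv * tv) * (1 - qv ^ 2 * tv)),
    (1 - tv) * (2 + qv + tv + 2 * (qv * tv)) / (1 - qv * tv ^ 2),
    ?_, ?_, ?_, ?_, ?_, ?_, ?_, ?_, ?_, ?_, ?_⟩
  · have e := ip2_smul ((1 - qv * tv) * (1 - tv))
      (m2 + ((1 + qv) * (1 - tv) / (1 - qv * tv)) • m11) m11
    rw [hJ2] at e
    have ez : ip2 (((1 - qv) * (1 - tv ^ 2) / 2, (1 + qv) * (1 - tv) ^ 2 / 2) : Kf × Kf) m11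
        = 0 := by
      rw [ip2_eq]
      exact div_eq_zero_iff.mpr (Or.inl (by simp only [m11]; ring))
    rw [ez] at e
    exact ((mul_eq_zero.mp e.symm).resolve_left hf2)
  · have e := ip3_smul ((1 - qv ^ 2 * tv) * (1 - qv * tv) * (1 - tv))
      (m3 + ((1 + qv + qv ^ 2) * (1 - tv) / (1 - qv ^ 2 * tv)) • m21 +
        ((1 + qv) * (1 + qv + qv ^ 2) * (1 - tv) ^ 2 /
          ((1 - qv * tv) * (1 - qv ^ 2 * tv))) • m111)
      (m21 + ((1 - tv) * (2 + qv + tv + 2 * (qv * tv)) / (1 - qv * tv ^ 2)) • m111)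
    rw [hJ3] at e
    have e2 := ip3_smul' ((1 - qv * tv ^ 2) * (1 - tv) ^ 2)
      (((1 - qv) * (1 - qv ^ 2) * (1 - tv ^ 3) / 3,
        (1 - qv ^ 3) * (1 - tv) * (1 - tv ^ 2) / 2,
        (1 + qv) * (1 + qv + qv ^ 2) * (1 - tv) ^ 3 / 6) : Kf × Kf × Kf)
      (m21 + ((1 - tv) * (2 + qv + tv + 2 * (qv * tv)) / (1 - qv * tv ^ 2)) • m111)
    rw [hJ21] at e2
    have ez : ip3 (((1 - qv) * (1 - qv ^ 2) * (1 - tv ^ 3) / 3,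
          (1 - qv ^ 3) * (1 - tv) * (1 - tv ^ 2) / 2,
          (1 + qv) * (1 + qv + qv ^ 2) * (1 - tv) ^ 3 / 6) : Kf × Kf × Kf)
        ((-(1 - qv) * (1 - tv) * (1 - tv ^ 3) / 3,
          (1 - tv ^ 2) * (tv - qv) * (1 - tv) / 2,
          (2 - 5 * tv + 3 * tv ^ 2 + tv ^ 3 - tv ^ 4 +
            qv * (1 - tv - 3 * tv ^ 2 + 5 * tv ^ 3 - 2 * tv ^ 4)) / 6) : Kf × Kf × Kf) = 0 := by
      rw [ip3_eq]
      exact div_eq_zero_iff.mpr (Or.inl (by ring))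
    rw [ez] at e2
    have e3 := (mul_eq_zero.mp e2.symm).resolve_left hf21
    rw [e3] at e
    exact (mul_eq_zero.mp e.symm).resolve_left hf3
  · have e := ip3_smul ((1 - qv ^ 2 * tv) * (1 - qv * tv) * (1 - tv))
      (m3 + ((1 + qv + qv ^ 2) * (1 - tv) / (1 - qv ^ 2 * tv)) • m21 +
        ((1 + qv) * (1 + qv + qv ^ 2) * (1 - tv) ^ 2 /
          ((1 - qv * tv) * (1 - qv ^ 2 * tv))) • m111) m111
    rw [hJ3] at e
    have ez : ip3 (((1 - qv) * (1 - qv ^ 2) * (1 - tv ^ 3) / 3,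
          (1 - qv ^ 3) * (1 - tv) * (1 - tv ^ 2) / 2,
          (1 + qv) * (1 + qv + qv ^ 2) * (1 - tv) ^ 3 / 6) : Kf × Kf × Kf) m111 = 0 := by
      rw [ip3_eq]
      exact div_eq_zero_iff.mpr (Or.inl (by simp only [m111]; ring))
    rw [ez] at e
    exact ((mul_eq_zero.mp e.symm).resolve_left hf3)
  · have e := ip3_smul ((1 - qv * tv ^ 2) * (1 - tv) ^ 2)
      (m21 + ((1 - tv) * (2 + qv + tv + 2 * (qv * tv)) / (1 - qv * tv ^ 2)) • m111) m111
    rw [hJ21] at e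
    have ez : ip3 ((-(1 - qv) * (1 - tv) * (1 - tv ^ 3) / 3,
          (1 - tv ^ 2) * (tv - qv) * (1 - tv) / 2,
          (2 - 5 * tv + 3 * tv ^ 2 + tv ^ 3 - tv ^ 4 +
            qv * (1 - tv - 3 * tv ^ 2 + 5 * tv ^ 3 - 2 * tv ^ 4)) / 6) : Kf × Kf × Kf) m111
        = 0 := by
      rw [ip3_eq]
      exact div_eq_zero_iff.mpr (Or.inl (by simp only [m111]; ring))
    rw [ez] at e
    exact ((mul_eq_zero.mp e.symm).resolve_left hf21)
  · norm_num
  · simp only [ip1]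
    field_simp [h1]
  · rw [hJ2, ip2_eq, div_eq_iff D2_ne]
    ring
  · rw [ip2_eq, div_eq_iff D2_ne]
    simp only [m11, Prod.smul_mk, smul_eq_mul]
    ring
  · rw [hJ3, ip3_eq, div_eq_iff D3_ne]
    ring
  · rw [hJ21, ip3_eq, div_eq_iff D3_ne]
    ring
  · rw [ip3_eq, div_eq_iff D3_ne]
    simp only [m111, Prod.smul_mk, smul_eq_mul]
    ring
end
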